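/- Let B = ℓ^q_{v_s}(ℤ^{2d}), 0 < q ≤ 1, s ≥ 0, and for a matrix A = (a_{λ,μ})_{λ,μ∈ℤ^{2d}} define d_A(μ) = sup_λ |a_{λ,λ−μ}|. The class C_B of matrices A with d_A ∈ B is a quasi-Banach algebra under matrix multiplication with quasi-norm ‖A‖_{C_B} = ‖d_A‖_B: in particular, if A, B ∈ C_B then AB ∈ C_B and ‖AB‖_{C_B} ≤ ‖A‖_{C_B}‖B‖_{C_B}. -/

import Mathlib

/-!
The heart of the matter is the pointwise estimate `d_{AB} ≤ d_A ∗ d_B`: reindexing the product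
`∑_ν a_{λ,ν} b_{ν,λ-μ}` by `ν = λ - κ` puts `a` on its `κ`-th and `b` on its `(μ-κ)`-th diagonal.
The weight `v_s` is submultiplicative, so `(d_A ∗ d_B) v_s ≤ (d_A v_s) ∗ (d_B v_s)`, and for
`q ≤ 1` the map `x ↦ x ^ q` is subadditive, which turns `ℓ^q` into a convolution quasi-algebra:
`‖f ∗ g‖_q^q ≤ ‖f‖_q^q ‖g‖_q^q`. All of this is done in `ℝ≥0∞`, free of summability side
conditions; finiteness of the sums for `A` and `B` then yields the real-valued statement.
-/

open scoped ENNReal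

namespace ENNReal

variable {q : ℝ}

theorem rpow_sum_le_sum_rpow {ι : Type*} (s : Finset ι) (z : ι → ℝ≥0∞)
    (hq0 : 0 < q) (hq1 : q ≤ 1) : (∑ i ∈ s, z i) ^ q ≤ ∑ i ∈ s, z i ^ q := by
  classical
  induction s using Finset.induction_on with
  | empty => simp [zero_rpow_of_pos hq0]
  | insert a s ha ih =>
    rw [Finset.sum_insert ha, Finset.sum_insert ha]
    exact (rpow_add_le_add_rpow _ _ hq0.le hq1).trans (add_le_add le_rfl ih)

theorem rpow_tsum_le_tsum_rpow {ι : Type*} (z : ι → ℝ≥0∞) (hq0 : 0 < q) (hq1 : q ≤ 1) :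
    (∑' i, z i) ^ q ≤ ∑' i, z i ^ q := by
  rw [ENNReal.tsum_eq_iSup_sum, ← orderIsoRpow_apply q hq0, OrderIso.map_iSup]
  exact iSup_le fun s => (rpow_sum_le_sum_rpow s z hq0 hq1).trans (ENNReal.sum_le_tsum s)

variable {G : Type*} [AddGroup G]

theorem tsum_rpow_conv_le (f g : G → ℝ≥0∞) (hq0 : 0 < q) (hq1 : q ≤ 1) :
    ∑' μ, (∑' κ, f κ * g (μ - κ)) ^ q ≤ (∑' μ, f μ ^ q) * ∑' μ, g μ ^ q :=
  calc ∑' μ, (∑' κ, f κ * g (μ - κ)) ^ q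
      ≤ ∑' μ, ∑' κ, f κ ^ q * g (μ - κ) ^ q := ENNReal.tsum_le_tsum fun μ =>
        (rpow_tsum_le_tsum_rpow _ hq0 hq1).trans_eq
          (tsum_congr fun κ => mul_rpow_of_nonneg _ _ hq0.le)
    _ = ∑' κ, f κ ^ q * ∑' μ, g (μ - κ) ^ q := by
        rw [ENNReal.tsum_comm]
        exact tsum_congr fun κ => ENNReal.tsum_mul_left
    _ = (∑' μ, f μ ^ q) * ∑' μ, g μ ^ q := by
        rw [← ENNReal.tsum_mul_right]
        exact tsum_congr fun κ => congrArg _ ((Equiv.subRight κ).tsum_eq fun μ => g μ ^ q)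

theorem tsum_rpow_conv_mul_le (f g w : G → ℝ≥0∞) (hw : ∀ κ μ, w μ ≤ w κ * w (μ - κ))
    (hq0 : 0 < q) (hq1 : q ≤ 1) :
    ∑' μ, ((∑' κ, f κ * g (μ - κ)) * w μ) ^ q ≤
      (∑' μ, (f μ * w μ) ^ q) * ∑' μ, (g μ * w μ) ^ q := by
  refine le_trans (ENNReal.tsum_le_tsum fun μ => rpow_le_rpow ?_ hq0.le)
    (tsum_rpow_conv_le (fun μ => f μ * w μ) (fun μ => g μ * w μ) hq0 hq1)
  rw [← ENNReal.tsum_mul_right]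
  refine ENNReal.tsum_le_tsum fun κ => ?_
  calc f κ * g (μ - κ) * w μ ≤ f κ * g (μ - κ) * (w κ * w (μ - κ)) := by gcongr; exact hw κ μ
    _ = f κ * w κ * (g (μ - κ) * w (μ - κ)) := by ring

end ENNReal

section MatrixDecay

variable {G R : Type*}

/-- The paper's `d_A(μ) = sup_λ |a_{λ,λ-μ}|`, taken in `ℝ≥0∞` so that it is always meaningful. -/
noncomputable def diagDecay [Sub G] [ENorm R] (A : G → G → R) (μ : G) : ℝ≥0∞ :=
  ⨆ lam, ‖A lam (lam - μ)‖ₑ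

theorem enorm_le_diagDecay [Sub G] [ENorm R] (A : G → G → R) (lam μ : G) :
    ‖A lam (lam - μ)‖ₑ ≤ diagDecay A μ :=
  le_iSup (fun lam => ‖A lam (lam - μ)‖ₑ) lam

theorem enorm_mul_le_mul [SeminormedRing R] (a b : R) : ‖a * b‖ₑ ≤ ‖a‖ₑ * ‖b‖ₑ := by
  simpa only [enorm, ← ENNReal.coe_mul, ENNReal.coe_le_coe] using nnnorm_mul_le a b

theorem diagDecay_mul_le [AddGroup G] [NormedRing R] (A B : G → G → R) (μ : G) :
    diagDecay (fun lam μ => ∑' ν, A lam ν * B ν μ) μ ≤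
      ∑' κ, diagDecay A κ * diagDecay B (μ - κ) := by
  refine iSup_le fun lam => ?_
  calc ‖∑' ν, A lam ν * B ν (lam - μ)‖ₑ
      ≤ ∑' ν, ‖A lam ν‖ₑ * ‖B ν (lam - μ)‖ₑ :=
        (enorm_tsum_le_tsum_enorm (f := fun ν => A lam ν * B ν (lam - μ))).trans
          (ENNReal.tsum_le_tsum fun ν => enorm_mul_le_mul _ _)
    _ = ∑' κ, ‖A lam (lam - κ)‖ₑ * ‖B (lam - κ) (lam - κ - (μ - κ))‖ₑ := by
        rw [← (Equiv.subLeft lam).tsum_eq]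
        simp only [Equiv.subLeft_apply, sub_sub_sub_cancel_right]
    _ ≤ ∑' κ, diagDecay A κ * diagDecay B (μ - κ) := ENNReal.tsum_le_tsum fun κ =>
        mul_le_mul' (enorm_le_diagDecay A lam κ) (enorm_le_diagDecay B _ _)

end MatrixDecay

theorem one_add_norm_add_rpow_le {E : Type*} [SeminormedAddGroup E] (x y : E) {s : ℝ}
    (hs : 0 ≤ s) : (1 + ‖x + y‖) ^ s ≤ (1 + ‖x‖) ^ s * (1 + ‖y‖) ^ s := by
  rw [← Real.mul_rpow (by positivity) (by positivity)]
  refine Real.rpow_le_rpow (by positivity) ?_ hs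
  nlinarith [norm_add_le x y, norm_nonneg x, norm_nonneg y]

theorem one_add_norm_intCast_rpow_le {ι : Type*} [Fintype ι] (κ μ : ι → ℤ) {s : ℝ} (hs : 0 ≤ s) :
    (1 + ‖(fun i => (μ i : ℝ) : ι → ℝ)‖) ^ s ≤
      (1 + ‖(fun i => (κ i : ℝ) : ι → ℝ)‖) ^ s *
        (1 + ‖(fun i => ((μ - κ) i : ℝ) : ι → ℝ)‖) ^ s := by
  have hsplit : (fun i => (μ i : ℝ) : ι → ℝ) = (fun i => (κ i : ℝ)) + fun i => ((μ - κ) i : ℝ) := by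
    funext i; simp
  rw [hsplit]
  exact one_add_norm_add_rpow_le _ _ hs

section RealBridge

variable {ι E : Type*} [SeminormedAddGroup E]

theorem ofReal_iSup_norm [Nonempty ι] (f : ι → E) (hf : BddAbove (Set.range fun i => ‖f i‖)) :
    ENNReal.ofReal (⨆ i, ‖f i‖) = ⨆ i, ‖f i‖ₑ := by
  rw [Monotone.map_ciSup_of_continuousAt ENNReal.continuous_ofReal.continuousAt
    ENNReal.ofReal_mono hf]
  simp_rw [ofReal_norm]

theorem bddAbove_range_norm_of_iSup_enorm_ne_top (f : ι → E) (hf : ⨆ i, ‖f i‖ₑ ≠ ⊤) :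
    BddAbove (Set.range fun i => ‖f i‖) := by
  refine ⟨(⨆ i, ‖f i‖ₑ).toReal, ?_⟩
  rintro _ ⟨i, rfl⟩
  show ‖f i‖ ≤ _
  rw [← toReal_enorm]
  exact ENNReal.toReal_mono hf (le_iSup (fun i => ‖f i‖ₑ) i)

theorem summable_of_tsum_ofReal_ne_top {u : ι → ℝ} (hu : ∀ i, 0 ≤ u i)
    (h : ∑' i, ENNReal.ofReal (u i) ≠ ⊤) : Summable u := by
  simpa only [ENNReal.toReal_ofReal (hu _)] using ENNReal.summable_toReal h

end RealBridge

section DiagDecayBridge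

variable {G E : Type*} [SeminormedAddGroup E]

theorem iSup_norm_rpow_mul_rpow_nonneg [Sub G] (X : G → G → E) (μ : G) {r : ℝ} (q : ℝ)
    (hr : 0 ≤ r) : 0 ≤ (⨆ lam, ‖X lam (lam - μ)‖) ^ q * r ^ q :=
  mul_nonneg (Real.rpow_nonneg (Real.iSup_nonneg fun _ => norm_nonneg _) q) (Real.rpow_nonneg hr q)

variable [AddGroup G] {v : G → ℝ} {q : ℝ}

theorem ofReal_iSup_norm_rpow_mul_rpow (X : G → G → E) (μ : G) {r : ℝ} (hr : 0 ≤ r) (hq : 0 ≤ q)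
    (hX : BddAbove (Set.range fun lam => ‖X lam (lam - μ)‖)) :
    ENNReal.ofReal ((⨆ lam, ‖X lam (lam - μ)‖) ^ q * r ^ q) =
      (diagDecay X μ * ENNReal.ofReal r) ^ q := by
  have hsup : 0 ≤ ⨆ lam, ‖X lam (lam - μ)‖ := Real.iSup_nonneg fun _ => norm_nonneg _
  rw [← Real.mul_rpow hsup hr, ← ENNReal.ofReal_rpow_of_nonneg (mul_nonneg hsup hr) hq,
    ENNReal.ofReal_mul hsup, ofReal_iSup_norm _ hX, diagDecay]

theorem ofReal_tsum_iSup_norm_rpow_mul_rpow (X : G → G → E) (hv : ∀ μ, 0 ≤ v μ) (hq : 0 ≤ q)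
    (hX : ∀ μ, BddAbove (Set.range fun lam => ‖X lam (lam - μ)‖))
    (hXsum : Summable fun μ => (⨆ lam, ‖X lam (lam - μ)‖) ^ q * v μ ^ q) :
    ENNReal.ofReal (∑' μ, (⨆ lam, ‖X lam (lam - μ)‖) ^ q * v μ ^ q) =
      ∑' μ, (diagDecay X μ * ENNReal.ofReal (v μ)) ^ q := by
  rw [ENNReal.ofReal_tsum_of_nonneg (fun μ => iSup_norm_rpow_mul_rpow_nonneg X μ q (hv μ)) hXsum]
  exact tsum_congr fun μ => ofReal_iSup_norm_rpow_mul_rpow X μ (hv μ) hq (hX μ)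

theorem bddAbove_and_summable_of_tsum_diagDecay_ne_top (X : G → G → E) (hv : ∀ μ, 0 < v μ)
    (hq : 0 < q) (hX : ∑' μ, (diagDecay X μ * ENNReal.ofReal (v μ)) ^ q ≠ ⊤) :
    (∀ μ, BddAbove (Set.range fun lam => ‖X lam (lam - μ)‖)) ∧
      Summable fun μ => (⨆ lam, ‖X lam (lam - μ)‖) ^ q * v μ ^ q := by
  have hbdd (μ) : BddAbove (Set.range fun lam => ‖X lam (lam - μ)‖) := by
    refine bddAbove_range_norm_of_iSup_enorm_ne_top _ fun htop => hX ?_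
    refine ENNReal.tsum_eq_top_of_eq_top ⟨μ, ?_⟩
    rw [diagDecay, htop, ENNReal.top_mul (ENNReal.ofReal_pos.2 (hv μ)).ne',
      ENNReal.top_rpow_of_pos hq]
  refine ⟨hbdd, summable_of_tsum_ofReal_ne_top
    (fun μ => iSup_norm_rpow_mul_rpow_nonneg X μ q (hv μ).le) ?_⟩
  simpa only [ofReal_iSup_norm_rpow_mul_rpow X _ (hv _).le hq.le (hbdd _)] using hX

end DiagDecayBridge

/-- The matrix class `C_B`, `B = ℓ^q_{v_s}(ℤ^{2d})`, `0 < q ≤ 1`, `s ≥ 0`, is a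
quasi-Banach algebra under matrix multiplication: if `d_A, d_B ∈ B`, where
`d_A(μ) = sup_λ |a_{λ,λ-μ}|`, then the product matrix satisfies `d_{AB} ∈ B` and
`‖AB‖_{C_B} ≤ ‖A‖_{C_B} ‖B‖_{C_B}`. -/
theorem matrix_class_algebra (d : ℕ) (q s : ℝ) (hq0 : 0 < q) (hq1 : q ≤ 1) (hs : 0 ≤ s)
    (v : (Fin (2 * d) → ℤ) → ℝ)
    (hv : ∀ k, v k = (1 + ‖(fun i => (k i : ℝ) : Fin (2 * d) → ℝ)‖) ^ s)
    (A B : (Fin (2 * d) → ℤ) → (Fin (2 * d) → ℤ) → ℂ)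
    (hAbdd : ∀ μ, BddAbove (Set.range fun lam => ‖A lam (lam - μ)‖))
    (hBbdd : ∀ μ, BddAbove (Set.range fun lam => ‖B lam (lam - μ)‖))
    (hA : Summable fun μ => (⨆ lam, ‖A lam (lam - μ)‖) ^ q * v μ ^ q)
    (hB : Summable fun μ => (⨆ lam, ‖B lam (lam - μ)‖) ^ q * v μ ^ q)
    (P : (Fin (2 * d) → ℤ) → (Fin (2 * d) → ℤ) → ℂ)
    (hP : ∀ lam μ, P lam μ = ∑' ν, A lam ν * B ν μ) :
    (∀ μ, BddAbove (Set.range fun lam => ‖P lam (lam - μ)‖)) ∧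
      Summable (fun μ => (⨆ lam, ‖P lam (lam - μ)‖) ^ q * v μ ^ q) ∧
      (∑' μ, (⨆ lam, ‖P lam (lam - μ)‖) ^ q * v μ ^ q) ^ (1 / q) ≤
        (∑' μ, (⨆ lam, ‖A lam (lam - μ)‖) ^ q * v μ ^ q) ^ (1 / q) *
          (∑' μ, (⨆ lam, ‖B lam (lam - μ)‖) ^ q * v μ ^ q) ^ (1 / q) := by
  have hv_pos (μ) : 0 < v μ := hv μ ▸ zero_lt_one.trans_le (Real.one_le_rpow (by simp) hs)
  have hv_nonneg (μ) : 0 ≤ v μ := (hv_pos μ).le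
  have hw (κ μ) : ENNReal.ofReal (v μ) ≤ ENNReal.ofReal (v κ) * ENNReal.ofReal (v (μ - κ)) := by
    rw [← ENNReal.ofReal_mul (hv_nonneg κ), hv, hv, hv]
    exact ENNReal.ofReal_le_ofReal (one_add_norm_intCast_rpow_le κ μ hs)
  have hconv : ∑' μ, (diagDecay P μ * ENNReal.ofReal (v μ)) ^ q ≤
      (∑' μ, (diagDecay A μ * ENNReal.ofReal (v μ)) ^ q) *
        ∑' μ, (diagDecay B μ * ENNReal.ofReal (v μ)) ^ q := by
    obtain rfl : P = fun lam μ => ∑' ν, A lam ν * B ν μ := funext₂ hP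
    refine le_trans (ENNReal.tsum_le_tsum fun μ => ?_)
      (ENNReal.tsum_rpow_conv_mul_le _ _ _ hw hq0 hq1)
    gcongr
    exact diagDecay_mul_le A B μ
  have hsum_nonneg (X : (Fin (2 * d) → ℤ) → (Fin (2 * d) → ℤ) → ℂ) :
      0 ≤ ∑' μ, (⨆ lam, ‖X lam (lam - μ)‖) ^ q * v μ ^ q :=
    tsum_nonneg fun μ => iSup_norm_rpow_mul_rpow_nonneg X μ q (hv_nonneg μ)
  rw [← ofReal_tsum_iSup_norm_rpow_mul_rpow A hv_nonneg hq0.le hAbdd hA,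
    ← ofReal_tsum_iSup_norm_rpow_mul_rpow B hv_nonneg hq0.le hBbdd hB,
    ← ENNReal.ofReal_mul (hsum_nonneg A)] at hconv
  obtain ⟨hPbdd, hPsum⟩ := bddAbove_and_summable_of_tsum_diagDecay_ne_top P hv_pos hq0
    (ne_top_of_le_ne_top ENNReal.ofReal_ne_top hconv)
  rw [← ofReal_tsum_iSup_norm_rpow_mul_rpow P hv_nonneg hq0.le hPbdd hPsum,
    ENNReal.ofReal_le_ofReal_iff (mul_nonneg (hsum_nonneg A) (hsum_nonneg B))] at hconv
  refine ⟨hPbdd, hPsum, ?_⟩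
  rw [← Real.mul_rpow (hsum_nonneg A) (hsum_nonneg B)]
  exact Real.rpow_le_rpow (hsum_nonneg P) hconv (one_div_nonneg.2 hq0.le)
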